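/- For probability measures P and Q on ℝ with cumulative distribution functions C_P and C_Q and finite first moments, the 1-Wasserstein distance satisfies W₁(P,Q) = ∫_ℝ |C_P(x) − C_Q(x)| dx. -/
import Mathlib

open MeasureTheory ProbabilityTheory ENNReal Set Filter

section aux

/-- squeeze lemma for volume of sets between `Ioo` and `Ioc`. -/
lemma volume_between {b a : ℝ} {s : Set ℝ} (h1 : Ioo b a ⊆ s) (h2 : s ⊆ Ioc b a) :
    volume s = ENNReal.ofReal (a - b) := by
  refine le_antisymm ?_ ?_
  · calc volume s ≤ volume (Ioc b a) := measure_mono h2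
      _ = ENNReal.ofReal (a - b) := Real.volume_Ioc
  · calc ENNReal.ofReal (a - b) = volume (Ioo b a) := Real.volume_Ioo.symm
      _ ≤ volume s := measure_mono h1

lemma ofReal_add_ofReal_neg (a : ℝ) :
    ENNReal.ofReal a + ENNReal.ofReal (-a) = ENNReal.ofReal |a| := by
  rcases le_total a 0 with h | h
  · rw [ENNReal.ofReal_of_nonpos h, zero_add, abs_of_nonpos h]
  · rw [ENNReal.ofReal_of_nonpos (neg_nonpos.2 h), add_zero, abs_of_nonneg h]

/-- The quantile function of a real measure, with junk value 0 outside `(0,1)`. -/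
noncomputable def qf (μ : Measure ℝ) : ℝ → ℝ :=
  fun u => if u ∈ Set.Ioo (0:ℝ) 1 then sInf {x | u ≤ cdf μ x} else 0

variable (μ : Measure ℝ) [IsProbabilityMeasure μ]

lemma qf_le_iff {u x : ℝ} (hu : u ∈ Set.Ioo (0:ℝ) 1) :
    qf μ u ≤ x ↔ u ≤ cdf μ x := by
  set S := {x | u ≤ cdf μ x} with hS
  have hne : S.Nonempty := by
    obtain ⟨y, hy⟩ := ((tendsto_cdf_atTop μ).eventually (eventually_ge_nhds hu.2)).exists
    exact ⟨y, hy⟩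
  have hbdd : BddBelow S := by
    obtain ⟨y, hy⟩ := ((tendsto_cdf_atBot μ).eventually (eventually_lt_nhds hu.1)).exists
    refine ⟨y, fun z hz => ?_⟩
    by_contra hzy
    exact absurd (hz.trans (monotone_cdf μ (le_of_not_ge hzy))) (not_le.2 hy)
  have hmem : u ≤ cdf μ (sInf S) := by
    have hgt : ∀ z ∈ Ioi (sInf S), u ≤ cdf μ z := by
      intro z hz
      obtain ⟨s, hs, hsz⟩ := (csInf_lt_iff hbdd hne).mp hz
      exact hs.trans (monotone_cdf μ hsz.le)
    have hc : Tendsto (cdf μ) (nhdsWithin (sInf S) (Ioi (sInf S))) (nhds (cdf μ (sInf S))) :=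
      ((cdf μ).right_continuous (sInf S)).mono_left
        (nhdsWithin_mono _ Ioi_subset_Ici_self)
    exact ge_of_tendsto hc (eventually_nhdsWithin_of_forall hgt)
  rw [qf, if_pos hu]
  constructor
  · intro h; exact hmem.trans (monotone_cdf μ h)
  · intro h; exact csInf_le hbdd h

lemma measurable_qf : Measurable (qf μ) := by
  apply measurable_of_Iic
  intro x
  have : qf μ ⁻¹' Iic x =
      (Iic (cdf μ x) ∩ Ioo (0:ℝ) 1) ∪ ({u : ℝ | (0:ℝ) ≤ x} \ Ioo (0:ℝ) 1) := by
    ext u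
    by_cases hu : u ∈ Set.Ioo (0:ℝ) 1
    · simp [hu, qf_le_iff μ hu, Set.mem_preimage]
    · simp [hu, qf, Set.mem_preimage]
  rw [this]
  refine (measurableSet_Iic.inter measurableSet_Ioo).union
    (MeasurableSet.diff ?_ measurableSet_Ioo)
  by_cases h : (0:ℝ) ≤ x
  · simp [h]
  · simp [h]

lemma qf_preimage_inter (x : ℝ) :
    qf μ ⁻¹' Iic x ∩ Ioo (0:ℝ) 1 = Iic (cdf μ x) ∩ Ioo (0:ℝ) 1 := by
  ext u
  simp only [Set.mem_inter_iff, Set.mem_preimage, Set.mem_Iic, and_congr_left_iff]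
  intro hu
  exact qf_le_iff μ hu

lemma volume_Iic_cdf_inter (x : ℝ) :
    volume (Iic (cdf μ x) ∩ Ioo (0:ℝ) 1) = ENNReal.ofReal (cdf μ x) := by
  have h1 : Ioo (0:ℝ) (cdf μ x) ⊆ Iic (cdf μ x) ∩ Ioo (0:ℝ) 1 := by
    intro u hu
    exact ⟨hu.2.le, hu.1, lt_of_lt_of_le hu.2 (cdf_le_one μ x)⟩
  have h2 : Iic (cdf μ x) ∩ Ioo (0:ℝ) 1 ⊆ Ioc (0:ℝ) (cdf μ x) := by
    intro u hu
    exact ⟨hu.2.1, hu.1⟩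
  simpa using volume_between h1 h2

lemma map_qf : (volume.restrict (Ioo (0:ℝ) 1)).map (qf μ) = μ := by
  have hfin : IsProbabilityMeasure (volume.restrict (Ioo (0:ℝ) 1)) :=
    ⟨by simp [Real.volume_Ioo]⟩
  refine Measure.ext_of_Iic _ _ fun x => ?_
  rw [Measure.map_apply (measurable_qf μ) measurableSet_Iic,
    Measure.restrict_apply ((measurable_qf μ) measurableSet_Iic),
    qf_preimage_inter, volume_Iic_cdf_inter, ofReal_cdf]

end aux

section cost

/-- The "strictly between" set used in the layer-cake representation of transport cost. -/
def Dset : Set ((ℝ × ℝ) × ℝ) :=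
  {p | (p.1.1 ≤ p.2 ∧ p.2 < p.1.2) ∨ (p.1.2 ≤ p.2 ∧ p.2 < p.1.1)}

lemma measurableSet_Dset : MeasurableSet Dset := by
  have h1 : MeasurableSet {p : (ℝ × ℝ) × ℝ | p.1.1 ≤ p.2} :=
    measurableSet_le (measurable_fst.fst) measurable_snd
  have h2 : MeasurableSet {p : (ℝ × ℝ) × ℝ | p.2 < p.1.2} :=
    measurableSet_lt measurable_snd (measurable_fst.snd)
  have h3 : MeasurableSet {p : (ℝ × ℝ) × ℝ | p.1.2 ≤ p.2} :=
    measurableSet_le (measurable_fst.snd) measurable_snd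
  have h4 : MeasurableSet {p : (ℝ × ℝ) × ℝ | p.2 < p.1.1} :=
    measurableSet_lt measurable_snd (measurable_fst.fst)
  exact (h1.inter h2).union (h3.inter h4)

lemma section_Dset (z : ℝ × ℝ) :
    {t : ℝ | (z, t) ∈ Dset} = Ico (min z.1 z.2) (max z.1 z.2) := by
  ext t
  rcases le_total z.1 z.2 with h | h
  · simp only [Dset, Set.mem_setOf_eq, Set.mem_Ico, min_eq_left h, max_eq_right h]
    constructor
    · rintro (⟨h1, h2⟩ | ⟨h1, h2⟩)
      · exact ⟨h1, h2⟩
      · exact ⟨h.trans h1, h2.trans_le h⟩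
    · intro ⟨h1, h2⟩; exact Or.inl ⟨h1, h2⟩
  · simp only [Dset, Set.mem_setOf_eq, Set.mem_Ico, min_eq_right h, max_eq_left h]
    constructor
    · rintro (⟨h1, h2⟩ | ⟨h1, h2⟩)
      · exact ⟨h.trans h1, h2.trans_le h⟩
      · exact ⟨h1, h2⟩
    · intro ⟨h1, h2⟩; exact Or.inr ⟨h1, h2⟩

lemma volume_section_Dset (z : ℝ × ℝ) :
    volume {t : ℝ | (z, t) ∈ Dset} = edist z.1 z.2 := by
  rw [section_Dset, Real.volume_Ico, edist_dist, Real.dist_eq,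
    max_sub_min_eq_abs, abs_sub_comm]

lemma measurableSet_section_Dset (t : ℝ) :
    MeasurableSet {z : ℝ × ℝ | (z, t) ∈ Dset} :=
  (measurable_id.prodMk measurable_const) measurableSet_Dset

lemma cost_eq (γ : Measure (ℝ × ℝ)) [IsProbabilityMeasure γ] :
    ∫⁻ z, edist z.1 z.2 ∂γ = ∫⁻ t, γ {z | (z, t) ∈ Dset} ∂volume := by
  have hind : ∀ z : ℝ × ℝ, ∀ t : ℝ,
      Dset.indicator (fun _ => (1:ℝ≥0∞)) (z, t)
        = ({t | (z, t) ∈ Dset}).indicator (fun _ => (1:ℝ≥0∞)) t := by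
    intro z t
    by_cases h : (z, t) ∈ Dset
    · simp [Set.indicator, h]
    · simp [Set.indicator, h]
  have hind2 : ∀ t : ℝ, ∀ z : ℝ × ℝ,
      Dset.indicator (fun _ => (1:ℝ≥0∞)) (z, t)
        = ({z | (z, t) ∈ Dset}).indicator (fun _ => (1:ℝ≥0∞)) z := by
    intro t z
    by_cases h : (z, t) ∈ Dset
    · simp [Set.indicator, h]
    · simp [Set.indicator, h]
  calc ∫⁻ z, edist z.1 z.2 ∂γ
      = ∫⁻ z, ∫⁻ t, Dset.indicator (fun _ => (1:ℝ≥0∞)) (z, t) ∂volume ∂γ := by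
        refine lintegral_congr fun z => ?_
        have hms : MeasurableSet {t : ℝ | (z, t) ∈ Dset} :=
          (measurable_const.prodMk measurable_id) measurableSet_Dset
        rw [← volume_section_Dset z, ← lintegral_indicator_one hms]
        exact lintegral_congr fun t => (hind z t)
    _ = ∫⁻ t, ∫⁻ z, Dset.indicator (fun _ => (1:ℝ≥0∞)) (z, t) ∂γ ∂volume := by
        refine lintegral_lintegral_swap ?_
        exact (measurable_const.indicator measurableSet_Dset).aemeasurable
    _ = ∫⁻ t, γ {z | (z, t) ∈ Dset} ∂volume := by
        refine lintegral_congr fun t => ?_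
        have hms : MeasurableSet {z : ℝ × ℝ | (z, t) ∈ Dset} := measurableSet_section_Dset t
        rw [← lintegral_indicator_one hms]
        exact lintegral_congr fun z => (hind2 t z)

end cost

/-- The set of couplings of two measures. -/
def coupling {X : Type*} [MeasurableSpace X] (P Q : Measure X) : Set (Measure (X × X)) :=
  {γ | γ.map Prod.fst = P ∧ γ.map Prod.snd = Q}

/-- The 1-Wasserstein distance, as the infimum of transport cost over couplings. -/
noncomputable def W1 {X : Type*} [MeasurableSpace X] [EDist X] (P Q : Measure X) : ℝ≥0∞ :=
  ⨅ γ ∈ coupling P Q, ∫⁻ z, edist z.1 z.2 ∂γ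

section main

variable (P Q : Measure ℝ) [IsProbabilityMeasure P] [IsProbabilityMeasure Q]

lemma coupling_prob {γ : Measure (ℝ × ℝ)} (hγ : γ ∈ coupling P Q) :
    IsProbabilityMeasure γ := by
  constructor
  have h := congrArg (fun m : Measure ℝ => m Set.univ) hγ.1
  simpa [Measure.map_apply measurable_fst MeasurableSet.univ] using h

lemma section_ge {γ : Measure (ℝ × ℝ)} (hγ : γ ∈ coupling P Q) (t : ℝ) :
    ENNReal.ofReal |cdf P t - cdf Q t| ≤ γ {z | (z, t) ∈ Dset} := by
  set A := (Prod.fst : ℝ × ℝ → ℝ) ⁻¹' (Iic t) with hA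
  set B := (Prod.snd : ℝ × ℝ → ℝ) ⁻¹' (Iic t) with hB
  have hAm : MeasurableSet A := measurable_fst measurableSet_Iic
  have hBm : MeasurableSet B := measurable_snd measurableSet_Iic
  have hsec : {z : ℝ × ℝ | (z, t) ∈ Dset} = (A \ B) ∪ (B \ A) := by
    ext z
    simp only [Dset, Set.mem_setOf_eq, Set.mem_union, Set.mem_diff, hA, hB,
      Set.mem_preimage, Set.mem_Iic, not_le]
  have hgA : γ A = ENNReal.ofReal (cdf P t) := by
    rw [hA, ← Measure.map_apply measurable_fst measurableSet_Iic, hγ.1, ofReal_cdf]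
  have hgB : γ B = ENNReal.ofReal (cdf Q t) := by
    rw [hB, ← Measure.map_apply measurable_snd measurableSet_Iic, hγ.2, ofReal_cdf]
  have h1 : γ A - γ B ≤ γ (A \ B) := by
    rw [tsub_le_iff_right]
    calc γ A ≤ γ (B ∪ (A \ B)) := by
          refine measure_mono fun z hz => ?_
          by_cases h : z ∈ B
          exacts [Or.inl h, Or.inr ⟨hz, h⟩]
      _ ≤ γ B + γ (A \ B) := measure_union_le _ _
      _ = γ (A \ B) + γ B := add_comm _ _
  have h2 : γ B - γ A ≤ γ (B \ A) := by
    rw [tsub_le_iff_right]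
    calc γ B ≤ γ (A ∪ (B \ A)) := by
          refine measure_mono fun z hz => ?_
          by_cases h : z ∈ A
          exacts [Or.inl h, Or.inr ⟨hz, h⟩]
      _ ≤ γ A + γ (B \ A) := measure_union_le _ _
      _ = γ (B \ A) + γ A := add_comm _ _
  rw [hsec, measure_union disjoint_sdiff_sdiff (hBm.diff hAm)]
  rcases le_total (cdf P t) (cdf Q t) with h | h
  · calc ENNReal.ofReal |cdf P t - cdf Q t|
        = ENNReal.ofReal (cdf Q t - cdf P t) := by
          rw [abs_sub_comm, abs_of_nonneg (sub_nonneg.2 h)]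
      _ = γ B - γ A := by rw [hgA, hgB, ENNReal.ofReal_sub _ (cdf_nonneg P t)]
      _ ≤ γ (B \ A) := h2
      _ ≤ γ (A \ B) + γ (B \ A) := le_add_self
  · calc ENNReal.ofReal |cdf P t - cdf Q t|
        = ENNReal.ofReal (cdf P t - cdf Q t) := by
          rw [abs_of_nonneg (sub_nonneg.2 h)]
      _ = γ A - γ B := by rw [hgA, hgB, ENNReal.ofReal_sub _ (cdf_nonneg Q t)]
      _ ≤ γ (A \ B) := h1
      _ ≤ γ (A \ B) + γ (B \ A) := le_self_add

lemma prod_mem_coupling : P.prod Q ∈ coupling P Q := by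
  constructor <;> simp

lemma cost_prod_lt_top (hP : Integrable (fun x => x) P) (hQ : Integrable (fun x => x) Q) :
    ∫⁻ z, edist z.1 z.2 ∂(P.prod Q) < ⊤ := by
  have hxm : Measurable fun x : ℝ => ENNReal.ofReal |x| :=
    measurable_abs.ennreal_ofReal
  have hb : ∀ z : ℝ × ℝ, edist z.1 z.2 ≤ ENNReal.ofReal |z.1| + ENNReal.ofReal |z.2| := by
    intro z
    rw [edist_dist, Real.dist_eq, ← ENNReal.ofReal_add (abs_nonneg _) (abs_nonneg _)]
    refine ENNReal.ofReal_le_ofReal ?_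
    rw [sub_eq_add_neg]
    exact (abs_add_le _ _).trans_eq (by rw [abs_neg])
  have hfst : ∫⁻ z : ℝ × ℝ, ENNReal.ofReal |z.1| ∂(P.prod Q) = ∫⁻ x, ENNReal.ofReal |x| ∂P := by
    rw [← lintegral_map hxm measurable_fst]
    simp
  have hsnd : ∫⁻ z : ℝ × ℝ, ENNReal.ofReal |z.2| ∂(P.prod Q) = ∫⁻ x, ENNReal.ofReal |x| ∂Q := by
    rw [← lintegral_map hxm measurable_snd]
    simp
  have hfinP : ∫⁻ x, ENNReal.ofReal |x| ∂P < ⊤ := by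
    have := hP.2
    simp only [HasFiniteIntegral] at this
    simpa [← Real.enorm_eq_ofReal_abs] using this
  have hfinQ : ∫⁻ x, ENNReal.ofReal |x| ∂Q < ⊤ := by
    have := hQ.2
    simp only [HasFiniteIntegral] at this
    simpa [← Real.enorm_eq_ofReal_abs] using this
  calc ∫⁻ z, edist z.1 z.2 ∂(P.prod Q)
      ≤ ∫⁻ z : ℝ × ℝ, (ENNReal.ofReal |z.1| + ENNReal.ofReal |z.2|) ∂(P.prod Q) :=
        lintegral_mono hb
    _ = ∫⁻ z : ℝ × ℝ, ENNReal.ofReal |z.1| ∂(P.prod Q)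
        + ∫⁻ z : ℝ × ℝ, ENNReal.ofReal |z.2| ∂(P.prod Q) :=
        lintegral_add_left (hxm.comp measurable_fst) _
    _ < ⊤ := by rw [hfst, hsnd]; exact ENNReal.add_lt_top.2 ⟨hfinP, hfinQ⟩

/-- The quantile (monotone) coupling. -/
noncomputable def qcoupling : Measure (ℝ × ℝ) :=
  (volume.restrict (Ioo (0:ℝ) 1)).map (fun u => (qf P u, qf Q u))

instance : IsProbabilityMeasure (volume.restrict (Ioo (0:ℝ) 1)) :=
  ⟨by simp [Real.volume_Ioo]⟩

instance : IsProbabilityMeasure (qcoupling P Q) :=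
  Measure.isProbabilityMeasure_map ((measurable_qf P).prodMk (measurable_qf Q)).aemeasurable

lemma qcoupling_mem : qcoupling P Q ∈ coupling P Q := by
  constructor
  · rw [qcoupling, Measure.map_map measurable_fst ((measurable_qf P).prodMk (measurable_qf Q))]
    exact map_qf P
  · rw [qcoupling, Measure.map_map measurable_snd ((measurable_qf P).prodMk (measurable_qf Q))]
    exact map_qf Q

lemma volume_Ioc_inter {a b : ℝ} (hb : 0 ≤ b) (ha : a ≤ 1) :
    volume (Ioc b a ∩ Ioo (0:ℝ) 1) = ENNReal.ofReal (a - b) := by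
  refine volume_between (fun u hu => ?_) Set.inter_subset_left
  exact ⟨⟨hu.1, hu.2.le⟩, hb.trans_lt hu.1, hu.2.trans_le ha⟩

lemma qcoupling_section (t : ℝ) :
    qcoupling P Q {z | (z, t) ∈ Dset} = ENNReal.ofReal |cdf P t - cdf Q t| := by
  rw [qcoupling, Measure.map_apply ((measurable_qf P).prodMk (measurable_qf Q))
      (measurableSet_section_Dset t),
    Measure.restrict_apply (((measurable_qf P).prodMk (measurable_qf Q))
      (measurableSet_section_Dset t))]
  have hE : ((fun u => (qf P u, qf Q u)) ⁻¹' {z | (z, t) ∈ Dset}) ∩ Ioo (0:ℝ) 1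
      = (Ioc (cdf Q t) (cdf P t) ∩ Ioo (0:ℝ) 1) ∪ (Ioc (cdf P t) (cdf Q t) ∩ Ioo (0:ℝ) 1) := by
    ext u
    simp only [Set.mem_inter_iff, Set.mem_preimage, Dset, Set.mem_setOf_eq, Set.mem_union,
      Set.mem_Ioc, Set.mem_Ioo]
    constructor
    · rintro ⟨h, hu⟩
      have hu' : u ∈ Ioo (0:ℝ) 1 := hu
      rcases h with ⟨h1, h2⟩ | ⟨h1, h2⟩
      · refine Or.inl ⟨⟨?_, (qf_le_iff P hu').1 h1⟩, hu⟩
        by_contra hc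
        exact absurd ((qf_le_iff Q hu').2 (not_lt.1 hc)) (not_le.2 h2)
      · refine Or.inr ⟨⟨?_, (qf_le_iff Q hu').1 h1⟩, hu⟩
        by_contra hc
        exact absurd ((qf_le_iff P hu').2 (not_lt.1 hc)) (not_le.2 h2)
    · rintro (⟨⟨h1, h2⟩, hu⟩ | ⟨⟨h1, h2⟩, hu⟩)
      · have hu' : u ∈ Ioo (0:ℝ) 1 := hu
        refine ⟨Or.inl ⟨(qf_le_iff P hu').2 h2, ?_⟩, hu⟩
        by_contra hc
        exact absurd ((qf_le_iff Q hu').1 (not_lt.1 hc)) (not_le.2 h1)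
      · have hu' : u ∈ Ioo (0:ℝ) 1 := hu
        refine ⟨Or.inr ⟨(qf_le_iff Q hu').2 h2, ?_⟩, hu⟩
        by_contra hc
        exact absurd ((qf_le_iff P hu').1 (not_lt.1 hc)) (not_le.2 h1)
  rw [hE, measure_union ?hd (measurableSet_Ioc.inter measurableSet_Ioo),
    volume_Ioc_inter (cdf_nonneg Q t) (cdf_le_one P t),
    volume_Ioc_inter (cdf_nonneg P t) (cdf_le_one Q t)]
  · rw [← neg_sub (cdf P t) (cdf Q t)]
    exact ofReal_add_ofReal_neg _
  case hd =>
    refine Set.disjoint_left.2 fun u hu1 hu2 => ?_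
    exact absurd hu1.1.2 (not_le.2 hu2.1.1)

lemma cost_qcoupling :
    ∫⁻ z, edist z.1 z.2 ∂(qcoupling P Q)
      = ∫⁻ t, ENNReal.ofReal |cdf P t - cdf Q t| ∂volume := by
  rw [cost_eq]
  exact lintegral_congr (qcoupling_section P Q)

end main

/-- For probability measures `P`, `Q` on `ℝ` with CDFs `C_P`, `C_Q` and finite first
moments, `W₁(P,Q) = ∫ |C_P(x) − C_Q(x)| dx`. -/
theorem W1_eq_integral_abs_sub_cdf (P Q : Measure ℝ)
    [IsProbabilityMeasure P] [IsProbabilityMeasure Q]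
    (hP : Integrable (fun x => x) P) (hQ : Integrable (fun x => x) Q) :
    W1 P Q = ENNReal.ofReal (∫ x, |cdf P x - cdf Q x|) := by
  set L := ∫⁻ t, ENNReal.ofReal |cdf P t - cdf Q t| ∂volume with hL
  have hlow : ∀ γ ∈ coupling P Q, L ≤ ∫⁻ z, edist z.1 z.2 ∂γ := by
    intro γ hγ
    have := coupling_prob P Q hγ
    rw [cost_eq]
    exact lintegral_mono fun t => section_ge P Q hγ t
  have hup : W1 P Q ≤ L :=
    (iInf₂_le (qcoupling P Q) (qcoupling_mem P Q)).trans (le_of_eq (cost_qcoupling P Q))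
  have hW : W1 P Q = L := le_antisymm hup (le_iInf₂ hlow)
  have hfin : L ≠ ⊤ :=
    ne_top_of_le_ne_top (cost_prod_lt_top P Q hP hQ).ne (hlow _ (prod_mem_coupling P Q))
  have hmeas : Measurable fun t => |cdf P t - cdf Q t| :=
    ((monotone_cdf P).measurable.sub (monotone_cdf Q).measurable).abs
  rw [hW, MeasureTheory.integral_eq_lintegral_of_nonneg_ae
      (Filter.Eventually.of_forall fun t => abs_nonneg _) hmeas.aestronglyMeasurable,
    ENNReal.ofReal_toReal hfin]
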